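/- Let V₀ be a finite-dimensional complex vector space, let V₁, …, V_n ⊆ V₀ be subspaces, and let χ₁, …, χ_n be positive real numbers. Suppose that for every subspace U with 0 ≠ U ⊊ V₀ one has (1/dim U)·Σ_{i=1}^n χ_i·dim(V_i ∩ U) < (1/dim V₀)·Σ_{i=1}^n χ_i·dim V_i. Then the system (V₀; V₁, …, V_n) is indecomposable. -/

import Mathlib

/-!
A splitting `V₀ = W ⊕ W'` compatible with every `V i` makes both the dimension and the weighted
sum `∑ χ i * dim (V i ∩ U)` additive over `W` and `W'`. Hence the slope of `V₀` is the mediant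
of the slopes of `W` and `W'`, so it cannot strictly exceed both, as the stability inequalities
would demand.
-/

open Module Finset

/-- The system of subspaces `Vq` of `V` is indecomposable: there is no direct sum
decomposition `V = W ⊕ W'` with `W ≠ 0 ≠ W'` such that
`Vq q = (Vq q ∩ W) ⊕ (Vq q ∩ W')` for all `q`. -/
def IndecomposableSystem {ι : Type*} {V : Type*} [AddCommGroup V] [Module ℂ V]
    (Vq : ι → Submodule ℂ V) : Prop :=
  ¬ ∃ W W' : Submodule ℂ V, W ≠ ⊥ ∧ W' ≠ ⊥ ∧ IsCompl W W' ∧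
      ∀ q, Vq q = (Vq q ⊓ W) ⊔ (Vq q ⊓ W')

section SplitSubmodule

variable {K E : Type*} [DivisionRing K] [AddCommGroup E] [Module K E] [FiniteDimensional K E]

theorem Submodule.finrank_inf_add_finrank_inf_of_disjoint {P W W' : Submodule K E}
    (hWW' : Disjoint W W') (hP : P = P ⊓ W ⊔ P ⊓ W') :
    finrank K ↥(P ⊓ W) + finrank K ↥(P ⊓ W') = finrank K P := by
  have h := Submodule.finrank_sup_add_finrank_inf_eq (P ⊓ W) (P ⊓ W')
  rw [(hWW'.mono inf_le_right inf_le_right).eq_bot, finrank_bot, add_zero, ← hP] at h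
  exact h.symm

theorem sum_mul_finrank_inf_add_sum_mul_finrank_inf {ι : Type*} [Fintype ι]
    (V : ι → Submodule K E) (χ : ι → ℝ) {W W' : Submodule K E} (hWW' : Disjoint W W')
    (hsplit : ∀ i, V i = V i ⊓ W ⊔ V i ⊓ W') :
    ∑ i, χ i * (finrank K ↥(V i ⊓ W) : ℝ) + ∑ i, χ i * (finrank K ↥(V i ⊓ W') : ℝ) =
      ∑ i, χ i * (finrank K (V i) : ℝ) := by
  rw [← sum_add_distrib]
  refine sum_congr rfl fun i _ => ?_
  rw [← mul_add, ← Nat.cast_add,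
    Submodule.finrank_inf_add_finrank_inf_of_disjoint hWW' (hsplit i)]

end SplitSubmodule

theorem mediant_lt_div_of_div_lt_mediant {a b x y : ℝ} (ha : 0 < a) (hb : 0 < b)
    (h : x / a < (x + y) / (a + b)) : (x + y) / (a + b) < y / b := by
  rw [div_lt_div_iff₀ ha (by positivity)] at h
  rw [div_lt_div_iff₀ (by positivity) hb]
  linarith

theorem indecomposable_of_stability_inequalities_general
    {V₀ : Type*} [AddCommGroup V₀] [Module ℂ V₀] [FiniteDimensional ℂ V₀]
    (n : ℕ) (V : Fin n → Submodule ℂ V₀) (χ : Fin n → ℝ)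
    (hstab : ∀ U : Submodule ℂ V₀, U ≠ ⊥ → U ≠ ⊤ →
      (1 / (finrank ℂ U : ℝ)) * ∑ i, χ i * (finrank ℂ ↥(V i ⊓ U) : ℝ) <
      (1 / (finrank ℂ V₀ : ℝ)) * ∑ i, χ i * (finrank ℂ (V i) : ℝ)) :
    IndecomposableSystem V := by
  rintro ⟨W, W', hW, hW', hcompl, hsplit⟩
  have hpos : ∀ U : Submodule ℂ V₀, U ≠ ⊥ → (0 : ℝ) < finrank ℂ U := fun U hU => by
    exact_mod_cast Submodule.one_le_finrank_iff.mpr hU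
  have hWt : W ≠ ⊤ := fun h => hW' (eq_bot_of_isCompl_top (h ▸ hcompl).symm)
  have hW't : W' ≠ ⊤ := fun h => hW (eq_bot_of_isCompl_top (h ▸ hcompl))
  have hdim : (finrank ℂ W : ℝ) + finrank ℂ W' = finrank ℂ V₀ := by
    exact_mod_cast Submodule.finrank_add_eq_of_isCompl hcompl
  have hsum := sum_mul_finrank_inf_add_sum_mul_finrank_inf V χ hcompl.disjoint hsplit
  have hslopeW := hstab W hW hWt
  have hslopeW' := hstab W' hW' hW't
  simp only [one_div_mul_eq_div, ← hdim, ← hsum] at hslopeW hslopeW'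
  exact lt_asymm (mediant_lt_div_of_div_lt_mediant (hpos W hW) (hpos W' hW') hslopeW) hslopeW'

/-- A system of subspaces satisfying the strict stability inequalities of the
unitarization criterion for all proper nonzero subspaces is indecomposable. -/
theorem indecomposable_of_stability_inequalities
    {V₀ : Type*} [AddCommGroup V₀] [Module ℂ V₀] [FiniteDimensional ℂ V₀]
    (n : ℕ) (V : Fin n → Submodule ℂ V₀) (χ : Fin n → ℝ) (hχ : ∀ i, 0 < χ i)
    (hstab : ∀ U : Submodule ℂ V₀, U ≠ ⊥ → U ≠ ⊤ →
      (1 / (finrank ℂ U : ℝ)) * ∑ i, χ i * (finrank ℂ ↥(V i ⊓ U) : ℝ) <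
      (1 / (finrank ℂ V₀ : ℝ)) * ∑ i, χ i * (finrank ℂ (V i) : ℝ)) :
    IndecomposableSystem V :=
  indecomposable_of_stability_inequalities_general n V χ hstab
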